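/- Let A ∈ ℝ^{n×d}, let 2 < p < ∞, and let C ≥ 1. Then there exist an integer m ≤ (1 + 1/C)·n and a matrix A' ∈ ℝ^{m×d}, each of whose rows is a nonnegative scalar multiple of some row of A, such that: (i) ‖A'x‖_p = ‖Ax‖_p and ‖A'x‖_2 ≥ ‖Ax‖_2 for every x ∈ ℝ^d; (ii) max_{j ∈ [m]} σ_j^p(A') ≤ max_{i ∈ [n]} σ_i^p(A); (iii) 𝔖^p(A') = 𝔖^p(A); and (iv) for every j ∈ [m], τ_j(A') ≤ (Cd/n)^{2/p} · (max{Cd/n, max_{i ∈ [n]} τ_i(A)})^{1−2/p}. -/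
import Mathlib


open MeasureTheory Matrix Finset

/-- The `i`-th ℓ_p sensitivity of a matrix `A`:
`σ_i^p(A) = sup { |(Ax)_i|^p / ‖Ax‖_p^p : Ax ≠ 0 }` (zero if the set is empty). -/
noncomputable def lpSens (p : ℝ) {R C : Type*} [Fintype R] [Fintype C]
    (A : Matrix R C ℝ) (i : R) : ℝ :=
  sSup {r : ℝ | ∃ x : C → ℝ, A.mulVec x ≠ 0 ∧
    r = |A.mulVec x i| ^ p / ∑ j, |A.mulVec x j| ^ p}

/-- The total ℓ_p sensitivity `𝔖^p(A) = Σ_i σ_i^p(A)`. -/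
noncomputable def totalSens (p : ℝ) {R C : Type*} [Fintype R] [Fintype C]
    (A : Matrix R C ℝ) : ℝ := ∑ i, lpSens p A i

/-- The `i`-th leverage score `τ_i(A) = σ_i^2(A)`. -/
noncomputable def levScore {R C : Type*} [Fintype R] [Fintype C]
    (A : Matrix R C ℝ) (i : R) : ℝ := lpSens 2 A i

/-- The entrywise ℓ_p norm of a vector. -/
noncomputable def lpNorm (p : ℝ) {m : Type*} [Fintype m] (y : m → ℝ) : ℝ :=
  (∑ i, |y i| ^ p) ^ (1 / p)


private lemma euclid_sum_apply {n : ℕ} {κ : Type*} (s : Finset κ)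
    (f : κ → EuclideanSpace ℝ (Fin n)) (i : Fin n) :
    (∑ k ∈ s, f k) i = ∑ k ∈ s, f k i := by
  induction s using Finset.cons_induction with
  | empty => rfl
  | cons a s ha ih => rw [Finset.sum_cons, Finset.sum_cons, ← ih]; rfl

private lemma euclid_norm_sq {n : ℕ} (x : EuclideanSpace ℝ (Fin n)) :
    ‖x‖^2 = ∑ i, (x i)^2 := by
  rw [EuclideanSpace.norm_eq, Real.sq_sqrt (Finset.sum_nonneg fun i _ => sq_nonneg _)]
  simp [Real.norm_eq_abs, sq_abs]

private lemma exists_levBound (n d : ℕ) (A : Matrix (Fin n) (Fin d) ℝ) :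
    ∃ t : Fin n → ℝ, (∀ i, 0 ≤ t i) ∧ (∑ i, t i) ≤ d ∧
      ∀ (x : Fin d → ℝ), A.mulVec x ≠ 0 →
        ∀ i, |A.mulVec x i| ^ (2:ℝ) / (∑ j, |A.mulVec x j| ^ (2:ℝ)) ≤ t i := by
  classical
  set E := EuclideanSpace ℝ (Fin n)
  set f : (Fin d → ℝ) →ₗ[ℝ] E :=
    (WithLp.linearEquiv 2 ℝ (Fin n → ℝ)).symm.toLinearMap ∘ₗ A.mulVecLin with hf
  have hfa : ∀ (x : Fin d → ℝ) (i : Fin n), f x i = A.mulVec x i := fun x i => rfl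
  set V := LinearMap.range f
  have hr : Module.finrank ℝ V ≤ d := by
    have := f.finrank_range_le
    rwa [Module.finrank_fin_fun] at this
  set b := stdOrthonormalBasis ℝ V with hb
  refine ⟨fun i => ∑ k, ((b k : E) i)^2, fun i => Finset.sum_nonneg fun k _ => sq_nonneg _,
    ?_, ?_⟩
  · have h1 : ∀ k, ∑ i, ((b k : E) i)^2 = 1 := by
      intro k
      have hn : ‖(b k : E)‖ = 1 := by
        rw [Submodule.norm_coe]; exact b.orthonormal.1 k
      rw [← euclid_norm_sq, hn, one_pow]
    rw [Finset.sum_comm]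
    calc ∑ k, ∑ i, ((b k : E) i)^2 = ∑ _k : Fin (Module.finrank ℝ V), (1:ℝ) :=
          Finset.sum_congr rfl fun k _ => h1 k
      _ = Module.finrank ℝ V := by simp
      _ ≤ d := by exact_mod_cast hr
  · intro x hx i
    set y := A.mulVec x with hy
    have hyE : f x ∈ V := LinearMap.mem_range_self f x
    set yv : V := ⟨f x, hyE⟩ with hyv
    set c : Fin (Module.finrank ℝ V) → ℝ := fun k => b.repr yv k with hc
    have hexp : ∀ j, y j = ∑ k, c k * (b k : E) j := by
      intro j
      have h1 : (yv : E) = ∑ k, c k • (b k : E) := by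
        conv_lhs => rw [← b.sum_repr yv]
        push_cast [Submodule.coe_sum]
        rfl
      have h2 : (yv : E) j = y j := hfa x j
      rw [← h2, h1, euclid_sum_apply]
      rfl
    have hpar : ∑ k, (c k)^2 = ∑ j, (y j)^2 := by
      have h1 : ‖b.repr yv‖ = ‖yv‖ := b.repr.norm_map yv
      have h2 : ‖b.repr yv‖^2 = ∑ k, (c k)^2 := euclid_norm_sq _
      have h3 : ‖yv‖^2 = ∑ j, (y j)^2 := by
        rw [← Submodule.norm_coe, euclid_norm_sq]
        exact Finset.sum_congr rfl fun j _ => by rw [show (yv:E) j = y j from hfa x j]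
      rw [← h2, h1, h3]
    have hCS : (y i)^2 ≤ (∑ j, (y j)^2) * ∑ k, ((b k : E) i)^2 := by
      calc (y i)^2 = (∑ k, c k * (b k : E) i)^2 := by rw [hexp]
        _ ≤ (∑ k, (c k)^2) * ∑ k, ((b k : E) i)^2 :=
            Finset.sum_mul_sq_le_sq_mul_sq _ _ _
        _ = (∑ j, (y j)^2) * ∑ k, ((b k : E) i)^2 := by rw [hpar]
    have hpos : 0 < ∑ j, |y j| ^ (2:ℝ) := by
      obtain ⟨j, hj⟩ := Function.ne_iff.mp hx
      refine Finset.sum_pos' (fun j _ => Real.rpow_nonneg (abs_nonneg _) _)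
        ⟨j, Finset.mem_univ j, Real.rpow_pos_of_pos (abs_pos.mpr hj) _⟩
    have hconv : ∀ v : ℝ, |v| ^ (2:ℝ) = v^2 := by
      intro v
      rw [show (2:ℝ) = ((2:ℕ):ℝ) by norm_num, Real.rpow_natCast, sq_abs]
    rw [div_le_iff₀ hpos]
    calc |y i| ^ (2:ℝ) = (y i)^2 := hconv _
      _ ≤ (∑ j, (y j)^2) * ∑ k, ((b k : E) i)^2 := hCS
      _ = (∑ k, ((b k : E) i)^2) * ∑ j, |y j| ^ (2:ℝ) := by
          rw [mul_comm]
          exact congrArg _ (Finset.sum_congr rfl fun j _ => (hconv _).symm)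

private lemma sum_rpow_pos {R : Type*} [Fintype R] {y : R → ℝ} (hy : y ≠ 0) (q : ℝ) :
    0 < ∑ j, |y j| ^ q := by
  obtain ⟨i, hi⟩ := Function.ne_iff.mp hy
  exact Finset.sum_pos' (fun j _ => Real.rpow_nonneg (abs_nonneg _) q)
    ⟨i, Finset.mem_univ i, Real.rpow_pos_of_pos (abs_pos.mpr hi) q⟩

private lemma mem_sens_bounds {R C : Type*} [Fintype R] [Fintype C] {A : Matrix R C ℝ}
    {q : ℝ} {i : R} {r : ℝ}
    (hr : r ∈ {r : ℝ | ∃ x : C → ℝ, A.mulVec x ≠ 0 ∧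
      r = |A.mulVec x i| ^ q / ∑ j, |A.mulVec x j| ^ q}) : 0 ≤ r ∧ r ≤ 1 := by
  obtain ⟨x, hx, rfl⟩ := hr
  have hD : 0 < ∑ j, |A.mulVec x j| ^ q := sum_rpow_pos hx q
  constructor
  · exact div_nonneg (Real.rpow_nonneg (abs_nonneg _) _) hD.le
  · rw [div_le_one hD]
    exact Finset.single_le_sum (fun j _ => Real.rpow_nonneg (abs_nonneg _) q)
      (Finset.mem_univ i)

private lemma lpSens_nonneg' {q : ℝ} {R C : Type*} [Fintype R] [Fintype C]
    (A : Matrix R C ℝ) (i : R) : 0 ≤ lpSens q A i :=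
  Real.sSup_nonneg fun _ hr => (mem_sens_bounds hr).1

private lemma bddAbove_sensSet {q : ℝ} {R C : Type*} [Fintype R] [Fintype C]
    (A : Matrix R C ℝ) (i : R) :
    BddAbove {r : ℝ | ∃ x : C → ℝ, A.mulVec x ≠ 0 ∧
      r = |A.mulVec x i| ^ q / ∑ j, |A.mulVec x j| ^ q} :=
  ⟨1, fun _ hr => (mem_sens_bounds hr).2⟩

private lemma sSup_image_mul {c : ℝ} (hc : 0 ≤ c) {S : Set ℝ}
    (hS : ∀ r ∈ S, 0 ≤ r ∧ r ≤ 1) :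
    sSup ((fun r => c * r) '' S) = c * sSup S := by
  have himg0 : 0 ≤ sSup ((fun r => c * r) '' S) := by
    apply Real.sSup_nonneg
    rintro r ⟨r', hr', rfl⟩
    exact mul_nonneg hc (hS r' hr').1
  rcases S.eq_empty_or_nonempty with h | h
  · simp [h, Real.sSup_empty]
  · have hbdd : BddAbove S := ⟨1, fun r hr => (hS r hr).2⟩
    have hsup0 : 0 ≤ sSup S := Real.sSup_nonneg fun r hr => (hS r hr).1
    apply le_antisymm
    · apply Real.sSup_le
      · rintro r ⟨r', hr', rfl⟩
        exact mul_le_mul_of_nonneg_left (le_csSup hbdd hr') hc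
      · positivity
    · rcases eq_or_lt_of_le hc with hc0 | hc'
      · have hz : c * sSup S = 0 := by rw [← hc0, zero_mul]
        rw [hz]; exact himg0
      · have himg : BddAbove ((fun r => c * r) '' S) :=
          ⟨c, by rintro r ⟨r', hr', rfl⟩; exact mul_le_of_le_one_right hc (hS r' hr').2⟩
        have h1 : sSup S ≤ sSup ((fun r => c * r) '' S) / c := by
          apply Real.sSup_le
          · intro r hr
            rw [le_div_iff₀ hc', mul_comm]
            exact le_csSup himg ⟨r, hr, rfl⟩
          · exact div_nonneg himg0 hc
        calc c * sSup S ≤ c * (sSup ((fun r => c * r) '' S) / c) :=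
              mul_le_mul_of_nonneg_left h1 hc
          _ = sSup ((fun r => c * r) '' S) := by field_simp

/-- **Flattening ℓ_p sensitivities and leverage scores, `p > 2`**. -/
theorem flatten_sensitivities_and_leverage_scores
    (n d : ℕ) (A : Matrix (Fin n) (Fin d) ℝ) (p C : ℝ) (hp : 2 < p) (hC : 1 ≤ C) :
    ∃ (m : ℕ) (A' : Matrix (Fin m) (Fin d) ℝ),
      (m : ℝ) ≤ (1 + 1 / C) * n ∧
      (∀ i' : Fin m, ∃ (i : Fin n) (c : ℝ), 0 ≤ c ∧ ∀ j, A' i' j = c * A i j) ∧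
      (∀ x : Fin d → ℝ, lpNorm p (A'.mulVec x) = lpNorm p (A.mulVec x) ∧
        lpNorm 2 (A.mulVec x) ≤ lpNorm 2 (A'.mulVec x)) ∧
      (∀ j : Fin m, lpSens p A' j ≤ ⨆ i : Fin n, lpSens p A i) ∧
      totalSens p A' = totalSens p A ∧
      ∀ j : Fin m, levScore A' j ≤
        (C * d / n) ^ (2 / p) *
          max (C * d / n) (⨆ i : Fin n, levScore A i) ^ (1 - 2 / p) := by
  classical
  have hp0 : (0:ℝ) < p := by linarith
  have hC0 : (0:ℝ) < C := by linarith
  have hexp2 : (0:ℝ) ≤ 2 / p := by positivity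
  have hexp0 : (0:ℝ) ≤ 1 - 2 / p := by
    have : 2 / p < 1 := (div_lt_one hp0).mpr hp
    linarith
  obtain ⟨t, ht0, htsum, htlev⟩ := exists_levBound n d A
  set k : Fin n → ℕ := fun i => max 1 ⌈((n:ℝ) * t i) / (C * d)⌉₊ with hk
  have hk1 : ∀ i, 1 ≤ k i := fun i => le_max_left _ _
  have hkpos : ∀ i, (0:ℝ) < (k i : ℝ) := fun i => by exact_mod_cast hk1 i
  have hk1' : ∀ i, (1:ℝ) ≤ (k i : ℝ) := fun i => by exact_mod_cast hk1 i
  set m := Fintype.card (Σ i : Fin n, Fin (k i)) with hm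
  set e : (Σ i : Fin n, Fin (k i)) ≃ Fin m := Fintype.equivFin _ with he
  set idx : Fin m → Fin n := fun j => (e.symm j).1 with hidx
  set cf : Fin n → ℝ := fun i => (k i : ℝ) ^ (-(1/p)) with hcf
  have hcpos : ∀ i, 0 < cf i := fun i => Real.rpow_pos_of_pos (hkpos i) _
  set A' : Matrix (Fin m) (Fin d) ℝ :=
    Matrix.of (fun j l => cf (idx j) * A (idx j) l) with hA'
  have hmv : ∀ (x : Fin d → ℝ) (j : Fin m),
      A'.mulVec x j = cf (idx j) * A.mulVec x (idx j) := by
    intro x j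
    simp [hA', Matrix.mulVec, dotProduct, Finset.mul_sum, mul_assoc]
  have hsum : ∀ g : Fin n → ℝ, ∑ j : Fin m, g (idx j) = ∑ i, (k i : ℝ) * g i := by
    intro g
    rw [← Equiv.sum_comp e (fun j => g (idx j))]
    have hι : ∀ σ : (Σ i : Fin n, Fin (k i)), idx (e σ) = σ.1 := fun σ => by
      simp [hidx]
    simp only [hι]
    rw [← Finset.univ_sigma_univ, Finset.sum_sigma]
    simp [Finset.card_univ]
  -- power computations
  have hcp : ∀ i, cf i ^ p = ((k i : ℝ))⁻¹ := by
    intro i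
    rw [hcf, ← Real.rpow_mul (hkpos i).le, show -(1/p) * p = -1 by field_simp,
      Real.rpow_neg_one]
  have hc2 : ∀ i, cf i ^ (2:ℝ) = (k i : ℝ) ^ (-(2/p)) := by
    intro i
    rw [hcf, ← Real.rpow_mul (hkpos i).le, show -(1/p) * 2 = -(2/p) by ring]
  have habs : ∀ (x : Fin d → ℝ) (j : Fin m) (q : ℝ),
      |A'.mulVec x j| ^ q = cf (idx j) ^ q * |A.mulVec x (idx j)| ^ q := by
    intro x j q
    rw [hmv, abs_mul, abs_of_pos (hcpos _), Real.mul_rpow (hcpos _).le (abs_nonneg _)]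
  have hNp : ∀ x, ∑ j, |A'.mulVec x j| ^ p = ∑ i, |A.mulVec x i| ^ p := by
    intro x
    calc ∑ j, |A'.mulVec x j| ^ p
        = ∑ j : Fin m, ((k (idx j) : ℝ))⁻¹ * |A.mulVec x (idx j)| ^ p :=
          Finset.sum_congr rfl fun j _ => by rw [habs, hcp]
      _ = ∑ i, (k i : ℝ) * (((k i : ℝ))⁻¹ * |A.mulVec x i| ^ p) :=
          hsum (fun i => ((k i : ℝ))⁻¹ * |A.mulVec x i| ^ p)
      _ = ∑ i, |A.mulVec x i| ^ p := Finset.sum_congr rfl fun i _ => by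
          rw [← mul_assoc, mul_inv_cancel₀ (hkpos i).ne', one_mul]
  have hN2 : ∀ x, ∑ j, |A'.mulVec x j| ^ (2:ℝ)
      = ∑ i, (k i : ℝ) ^ (1 - 2/p) * |A.mulVec x i| ^ (2:ℝ) := by
    intro x
    calc ∑ j, |A'.mulVec x j| ^ (2:ℝ)
        = ∑ j : Fin m, (k (idx j) : ℝ) ^ (-(2/p)) * |A.mulVec x (idx j)| ^ (2:ℝ) :=
          Finset.sum_congr rfl fun j _ => by rw [habs, hc2]
      _ = ∑ i, (k i : ℝ) * ((k i : ℝ) ^ (-(2/p)) * |A.mulVec x i| ^ (2:ℝ)) :=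
          hsum (fun i => (k i : ℝ) ^ (-(2/p)) * |A.mulVec x i| ^ (2:ℝ))
      _ = ∑ i, (k i : ℝ) ^ (1 - 2/p) * |A.mulVec x i| ^ (2:ℝ) :=
          Finset.sum_congr rfl fun i _ => by
            rw [← mul_assoc, show (1 - 2/p) = 1 + -(2/p) by ring,
              Real.rpow_add (hkpos i), Real.rpow_one]
  have hN2ge : ∀ x, ∑ i, |A.mulVec x i| ^ (2:ℝ) ≤ ∑ j, |A'.mulVec x j| ^ (2:ℝ) := by
    intro x
    rw [hN2]
    apply Finset.sum_le_sum
    intro i _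
    have h1 : (1:ℝ) ≤ (k i : ℝ) ^ (1 - 2/p) := Real.one_le_rpow (hk1' i) hexp0
    have h2 := mul_le_mul_of_nonneg_right h1 (Real.rpow_nonneg (abs_nonneg (A.mulVec x i)) (2:ℝ))
    linarith
  have hzero : ∀ x, A.mulVec x = 0 ↔ A'.mulVec x = 0 := by
    intro x
    constructor
    · intro h; funext j; simp [hmv, h]
    · intro h; funext i
      have hj := congrFun h (e ⟨i, ⟨0, hk1 i⟩⟩)
      rw [hmv] at hj
      have hidx' : idx (e ⟨i, ⟨0, hk1 i⟩⟩) = i := by simp [hidx]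
      rw [hidx'] at hj
      have := (mul_eq_zero.mp hj).resolve_left (hcpos i).ne'
      simpa using this
  -- exact sensitivity scaling
  have hsens : ∀ j : Fin m,
      lpSens p A' j = ((k (idx j) : ℝ))⁻¹ * lpSens p A (idx j) := by
    intro j
    have hset : {r : ℝ | ∃ x, A'.mulVec x ≠ 0 ∧
          r = |A'.mulVec x j| ^ p / ∑ j', |A'.mulVec x j'| ^ p}
        = (fun r => ((k (idx j) : ℝ))⁻¹ * r) ''
          {r : ℝ | ∃ x, A.mulVec x ≠ 0 ∧
            r = |A.mulVec x (idx j)| ^ p / ∑ i, |A.mulVec x i| ^ p} := by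
      ext r
      simp only [Set.mem_image, Set.mem_setOf_eq]
      constructor
      · rintro ⟨x, hx, rfl⟩
        exact ⟨|A.mulVec x (idx j)| ^ p / ∑ i, |A.mulVec x i| ^ p,
          ⟨x, fun h => hx (((hzero x).mp h)), rfl⟩,
          by rw [habs, hcp, hNp, mul_div_assoc]⟩
      · rintro ⟨r', ⟨x, hx, rfl⟩, rfl⟩
        exact ⟨x, fun h => hx ((hzero x).mpr h),
          by rw [habs, hcp, hNp, mul_div_assoc]⟩
    show sSup _ = _
    rw [hset, sSup_image_mul (by positivity) (fun r hr => mem_sens_bounds hr)]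
    rfl
  -- the five conclusions
  refine ⟨m, A', ?_, fun j => ⟨idx j, cf (idx j), (hcpos _).le, fun l => rfl⟩,
    ?_, ?_, ?_, ?_⟩
  · -- cardinality bound
    have hm' : (m:ℝ) = ∑ i, (k i : ℝ) := by
      rw [hm, Fintype.card_sigma]
      push_cast
      simp
    have hki : ∀ i, (k i : ℝ) ≤ 1 + ((n:ℝ) * t i) / (C * d) := by
      intro i
      have hx0 : 0 ≤ ((n:ℝ) * t i) / (C * d) :=
        div_nonneg (mul_nonneg (Nat.cast_nonneg n) (ht0 i)) (by positivity)
      rw [hk]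
      push_cast [Nat.cast_max]
      apply max_le
      · linarith
      · linarith [Nat.ceil_lt_add_one hx0]
    have hstep : (∑ i, ((n:ℝ) * t i) / (C * d)) ≤ (n:ℝ) / C := by
      rw [← Finset.sum_div, ← Finset.mul_sum]
      rcases Nat.eq_zero_or_pos d with hd | hd
      · subst hd
        simp
        positivity
      · have hd0 : (0:ℝ) < (d:ℝ) := by exact_mod_cast hd
        have h1 : (n:ℝ) * ∑ i, t i ≤ (n:ℝ) * d :=
          mul_le_mul_of_nonneg_left htsum (Nat.cast_nonneg n)
        calc ((n:ℝ) * ∑ i, t i) / (C * d) ≤ ((n:ℝ) * d) / (C * d) := by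
              apply div_le_div_of_nonneg_right h1 (by positivity)
          _ = (n:ℝ) / C := by
              rw [mul_comm C (d:ℝ), ← div_div, mul_div_assoc]
              rw [div_self hd0.ne', mul_one]
        
    calc (m:ℝ) ≤ ∑ i, (1 + ((n:ℝ) * t i) / (C * d)) := by
          rw [hm']; exact Finset.sum_le_sum fun i _ => hki i
      _ = n + ∑ i, ((n:ℝ) * t i) / (C * d) := by
          rw [Finset.sum_add_distrib]
          simp [Finset.card_univ]
      _ ≤ n + (n:ℝ) / C := by linarith
      _ = (1 + 1 / C) * n := by ring
  · -- norms
    intro x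
    constructor
    · show (∑ j, |A'.mulVec x j| ^ p) ^ (1/p) = (∑ i, |A.mulVec x i| ^ p) ^ (1/p)
      rw [hNp]
    · exact Real.rpow_le_rpow
        (Finset.sum_nonneg fun i _ => Real.rpow_nonneg (abs_nonneg _) _)
        (hN2ge x) (by norm_num)
  · -- max sensitivity
    intro j
    rw [hsens j]
    have h1 : lpSens p A (idx j) ≤ ⨆ i, lpSens p A i :=
      le_ciSup (Finite.bddAbove_range _) (idx j)
    have h2 : ((k (idx j) : ℝ))⁻¹ ≤ 1 := by
      rw [inv_le_one_iff₀]
      right; exact hk1' _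
    calc ((k (idx j) : ℝ))⁻¹ * lpSens p A (idx j)
        ≤ 1 * lpSens p A (idx j) :=
          mul_le_mul_of_nonneg_right h2 (lpSens_nonneg' A _)
      _ = lpSens p A (idx j) := one_mul _
      _ ≤ ⨆ i, lpSens p A i := h1
  · -- total sensitivity
    show ∑ j, lpSens p A' j = ∑ i, lpSens p A i
    rw [Finset.sum_congr rfl fun j _ => hsens j,
      hsum (fun i => ((k i : ℝ))⁻¹ * lpSens p A i)]
    exact Finset.sum_congr rfl fun i _ => by
      rw [← mul_assoc, mul_inv_cancel₀ (hkpos i).ne', one_mul]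
  · -- leverage scores
    intro j
    have hlev' : levScore A' j ≤ (k (idx j) : ℝ) ^ (-(2/p)) * levScore A (idx j) := by
      show sSup _ ≤ _
      apply Real.sSup_le
      · rintro r ⟨x, hx, rfl⟩
        have hx' : A.mulVec x ≠ 0 := fun h => hx ((hzero x).mp h)
        have hD : 0 < ∑ i, |A.mulVec x i| ^ (2:ℝ) := sum_rpow_pos hx' 2
        have hnum : |A'.mulVec x j| ^ (2:ℝ)
            = (k (idx j) : ℝ) ^ (-(2/p)) * |A.mulVec x (idx j)| ^ (2:ℝ) := by
          rw [habs, hc2]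
        calc |A'.mulVec x j| ^ (2:ℝ) / ∑ j', |A'.mulVec x j'| ^ (2:ℝ)
            ≤ |A'.mulVec x j| ^ (2:ℝ) / ∑ i, |A.mulVec x i| ^ (2:ℝ) :=
              div_le_div_of_nonneg_left (Real.rpow_nonneg (abs_nonneg _) _) hD (hN2ge x)
          _ = (k (idx j) : ℝ) ^ (-(2/p)) *
              (|A.mulVec x (idx j)| ^ (2:ℝ) / ∑ i, |A.mulVec x i| ^ (2:ℝ)) := by
              rw [hnum, mul_div_assoc]
          _ ≤ (k (idx j) : ℝ) ^ (-(2/p)) * levScore A (idx j) :=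
              mul_le_mul_of_nonneg_left
                (le_csSup (bddAbove_sensSet A _) ⟨x, hx', rfl⟩)
                (Real.rpow_nonneg (hkpos _).le _)
      · exact mul_nonneg (Real.rpow_nonneg (hkpos _).le _) (lpSens_nonneg' A _)
    set i := idx j with hi
    set q : ℝ := C * (d:ℝ) / (n:ℝ) with hq
    set B := ⨆ i : Fin n, levScore A i with hB
    have hτ0 : 0 ≤ levScore A i := lpSens_nonneg' A i
    have hτB : levScore A i ≤ B := le_ciSup (Finite.bddAbove_range _) i
    have hB0 : 0 ≤ B := hτ0.trans hτB
    have hq0 : 0 ≤ q := by positivity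
    have hnpos : 0 < n := i.pos
    have hτt : levScore A i ≤ t i :=
      Real.sSup_le (by rintro r ⟨x, hx, rfl⟩; exact htlev x hx i) (ht0 i)
    rcases le_or_gt (levScore A i) q with hcase | hcase
    · have h1 : levScore A' j ≤ levScore A i := by
        refine hlev'.trans ?_
        have h2 : (k i : ℝ) ^ (-(2/p)) ≤ 1 :=
          Real.rpow_le_one_of_one_le_of_nonpos (hk1' i) (neg_nonpos.mpr hexp2)
        calc (k i : ℝ) ^ (-(2/p)) * levScore A i ≤ 1 * levScore A i :=
              mul_le_mul_of_nonneg_right h2 hτ0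
          _ = levScore A i := one_mul _
      rcases eq_or_lt_of_le hq0 with hq0' | hqpos
      · have h3 : levScore A' j ≤ 0 := h1.trans (hcase.trans hq0'.symm.le)
        refine h3.trans ?_
        positivity
      · have hqq : q ^ (2/p) * q ^ (1 - 2/p) = q := by
          rw [← Real.rpow_add hqpos, show 2/p + (1 - 2/p) = 1 by ring, Real.rpow_one]
        calc levScore A' j ≤ q := h1.trans hcase
          _ = q ^ (2/p) * q ^ (1 - 2/p) := hqq.symm
          _ ≤ q ^ (2/p) * (max q B) ^ (1 - 2/p) :=
              mul_le_mul_of_nonneg_left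
                (Real.rpow_le_rpow hq0 (le_max_left _ _) hexp0)
                (Real.rpow_nonneg hq0 _)
    · have hτpos : 0 < levScore A i := hq0.trans_lt hcase
      have hqpos : 0 < q := by
        rcases eq_or_lt_of_le hq0 with hq0' | hqpos
        · exfalso
          have hn0 : ((n:ℝ)) ≠ 0 := Nat.cast_ne_zero.mpr hnpos.ne'
          have hcd : C * (d:ℝ) = 0 := by
            have := hq0'.symm
            rw [hq, div_eq_zero_iff] at this
            tauto
          have hd0 : (d:ℝ) = 0 := by
            rcases mul_eq_zero.mp hcd with h | h
            · exact absurd h hC0.ne'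
            · exact h
          have hti : t i ≤ 0 := by
            have h1 : ∑ i', t i' ≤ 0 := by rw [hd0] at htsum; linarith
            have h2 : t i ≤ ∑ i', t i' :=
              Finset.single_le_sum (fun i' _ => ht0 i') (Finset.mem_univ i)
            linarith
          linarith
        · exact hqpos
      have hki : levScore A i / q ≤ (k i : ℝ) := by
        have h1 : ((n:ℝ) * t i) / (C * d) ≤ (k i : ℝ) := by
          rw [hk]
          push_cast [Nat.cast_max]
          exact le_max_of_le_right (Nat.le_ceil _)
        have h2 : levScore A i / q ≤ t i / q := by
          exact div_le_div_of_nonneg_right hτt hqpos.le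
        have h3 : t i / q = ((n:ℝ) * t i) / (C * d) := by
          rw [hq, div_div_eq_mul_div, mul_comm (t i) (n:ℝ)]
        linarith
      have hkinv : (k i : ℝ) ^ (-(2/p)) ≤ (levScore A i / q) ^ (-(2/p)) :=
        Real.rpow_le_rpow_of_nonpos (div_pos hτpos hqpos) hki (neg_nonpos.mpr hexp2)
      have hcomp : (levScore A i / q) ^ (-(2/p)) * levScore A i
          = q ^ (2/p) * (levScore A i) ^ (1 - 2/p) := by
        have e1 : (levScore A i / q) ^ (-(2/p)) = (q / levScore A i) ^ (2/p) := by
          rw [Real.rpow_neg (div_nonneg hτ0 hq0), ← Real.inv_rpow (div_nonneg hτ0 hq0),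
            inv_div]
        have e2 : (q / levScore A i) ^ (2/p) = q ^ (2/p) / (levScore A i) ^ (2/p) :=
          Real.div_rpow hq0 hτ0 _
        have e3 : (levScore A i) ^ (1 - 2/p)
            = levScore A i / (levScore A i) ^ (2/p) := by
          rw [Real.rpow_sub hτpos, Real.rpow_one]
        rw [e1, e2, e3]
        ring
      calc levScore A' j ≤ (k i : ℝ) ^ (-(2/p)) * levScore A i := hlev'
        _ ≤ (levScore A i / q) ^ (-(2/p)) * levScore A i :=
            mul_le_mul_of_nonneg_right hkinv hτ0
        _ = q ^ (2/p) * (levScore A i) ^ (1 - 2/p) := hcomp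
        _ ≤ q ^ (2/p) * (max q B) ^ (1 - 2/p) :=
            mul_le_mul_of_nonneg_left
              (Real.rpow_le_rpow hτ0 (hτB.trans (le_max_right _ _)) hexp0)
              (Real.rpow_nonneg hq0 _)
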